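/- For every word w of length ≤ 7 that is a factor of some P^n(A), ref(w) is a factor of some P^m(A). -/

import Mathlib

inductive T where
  | A | B | C
deriving DecidableEq, Repr

open T

def P : T → List T
  | A => [A,B,C,B,A,C,B,C,A,B,C,B,A]
  | B => [B,C,A,C,B,A,C,A,B,C,A,C,B]
  | C => [C,A,B,A,C,B,A,B,C,A,B,A,C]

def Pw (w : List T) : List T := w.flatMap P

def SqFree (w : List T) : Prop := ∀ x : List T, x ≠ [] → ¬ (x ++ x) <:+: w

def rot : T → T
  | A => B
  | B => C
  | C => A

def rotw (w : List T) : List T := w.map rot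

def refT : T → T
  | A => A
  | B => C
  | C => B

def refTw (w : List T) : List T := w.map refT

def OccursAt (w v : List T) (i : ℕ) : Prop := (v.drop i).take w.length = w

/-! ### Auxiliary lemmas -/

def P2 : List T := Pw (Pw [A])

lemma P2_eq : Pw^[2] [A] = P2 := rfl

set_option maxRecDepth 10000 in
lemma P2_len : P2.length = 169 := by decide

lemma lenP (x : T) : (P x).length = 13 := by cases x <;> rfl

/-- Generic decomposition of an infix of an append. -/
lemma infix_app {α : Type*} : ∀ (l₁ l₂ w : List α), w <:+: l₁ ++ l₂ →
    w <:+: l₁ ∨ w <:+: l₂ ∨ ∃ s t, w = s ++ t ∧ t ≠ [] ∧ s <:+ l₁ ∧ t <+: l₂ := by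
  intro l₁
  induction l₁ with
  | nil => intro l₂ w h; exact Or.inr (Or.inl h)
  | cons a l₁ ih =>
    intro l₂ w h
    rw [List.cons_append, List.infix_cons_iff] at h
    rcases h with h | h
    · -- w is a prefix of (a :: l₁) ++ l₂
      have h' : w <+: (a :: l₁) ++ l₂ := by rw [List.cons_append]; exact h
      rcases Nat.le_total w.length (a :: l₁).length with hle | hle
      · left
        have : w <+: a :: l₁ :=
          List.prefix_of_prefix_length_le h' (List.prefix_append _ _) hle
        exact this.isInfix
      · have h1 : (a :: l₁) <+: w :=
          List.prefix_of_prefix_length_le (List.prefix_append _ _) h' hle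
        obtain ⟨t, ht⟩ := h1
        rcases eq_or_ne t [] with rfl | htne
        · left; rw [← ht, List.append_nil]
        · right; right
          refine ⟨a :: l₁, t, ht.symm, htne, List.suffix_refl _, ?_⟩
          obtain ⟨r, hr⟩ := h'
          rw [← ht, List.append_assoc] at hr
          have := List.append_cancel_left hr
          exact ⟨r, this⟩
    · rcases ih l₂ w h with h' | h' | ⟨s, t, hw, htne, hs, ht⟩
      · left; exact List.infix_cons h'
      · right; left; exact h'
      · right; right
        exact ⟨s, t, hw, htne, hs.trans (List.suffix_cons a l₁), ht⟩

/-- A short factor of `Pw v` is a factor of the image of a factor of `v` of length ≤ 2. -/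
lemma split7 : ∀ (v w : List T), w.length ≤ 7 → w <:+: Pw v →
    ∃ u, u <:+: v ∧ u.length ≤ 2 ∧ w <:+: Pw u := by
  intro v
  induction v with
  | nil =>
    intro w _ hw
    exact ⟨[], List.infix_refl _, by simp, hw⟩
  | cons a v ih =>
    intro w hlen hw
    have hPw : Pw (a :: v) = P a ++ Pw v := rfl
    rw [hPw] at hw
    rcases infix_app _ _ _ hw with h | h | ⟨s, t, hst, htne, hs, ht⟩
    · refine ⟨[a], ⟨[], v, rfl⟩, by simp, ?_⟩
      simpa [Pw] using h
    · obtain ⟨u, hu, hul, hwu⟩ := ih w hlen h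
      exact ⟨u, List.infix_cons hu, hul, hwu⟩
    · -- w = s ++ t crosses the boundary
      cases v with
      | nil =>
        simp only [Pw, List.flatMap_nil, List.prefix_nil] at ht
        exact absurd ht htne
      | cons b v' =>
        have hPb : Pw (b :: v') = P b ++ Pw v' := rfl
        rw [hPb] at ht
        have htlen : t.length ≤ (P b).length := by
          rw [lenP]
          calc t.length ≤ w.length := by rw [hst]; simp
            _ ≤ 13 := hlen.trans (by norm_num)
        have htb : t <+: P b :=
          List.prefix_of_prefix_length_le ht (List.prefix_append _ _) htlen
        obtain ⟨p, hp⟩ := hs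
        obtain ⟨q, hq⟩ := htb
        refine ⟨[a, b], ⟨[], v', rfl⟩, by simp, ?_⟩
        refine ⟨p, q, ?_⟩
        show p ++ w ++ q = Pw [a, b]
        have : Pw [a, b] = P a ++ P b := by simp [Pw]
        rw [this, ← hp, ← hq, hst]
        simp [List.append_assoc]

/-- From an infix, get the drop/take description. -/
lemma infix_core {L w : List T}
    (hC : ∀ i : Fin (L.length + 1), ∀ l : Fin 8, ((L.drop i).take l) <:+: P2)
    (hlen : w.length ≤ 7) (hw : w <:+: L) : w <:+: P2 := by
  obtain ⟨s, t, hst⟩ := hw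
  have hsl : s.length < L.length + 1 := by
    rw [← hst]; simp
  have hd : L.drop s.length = w ++ t := by
    rw [← hst, List.append_assoc, List.drop_left]
  have hw' : (L.drop s.length).take w.length = w := by
    rw [hd, List.take_left]
  have := hC ⟨s.length, hsl⟩ ⟨w.length, by omega⟩
  simpa [hw'] using this

set_option maxRecDepth 10000 in
/-- Short factors of images of short factors of `P2` are factors of `P2`. -/
lemma step (u w : List T) (hu2 : u.length ≤ 2) (huP : u <:+: P2)
    (hlen : w.length ≤ 7) (hw : w <:+: Pw u) : w <:+: P2 := by
  match u, hu2 with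
  | [], _ =>
    simp only [Pw, List.flatMap_nil, List.infix_nil] at hw
    subst hw
    exact ⟨[], P2, rfl⟩
  | [a], _ =>
    cases a
    · exact infix_core (by decide) hlen hw
    · exact infix_core (by decide) hlen hw
    · exact infix_core (by decide) hlen hw
  | [a, b], _ =>
    cases a <;> cases b
    · exact absurd huP (by decide)
    · exact infix_core (by decide) hlen hw
    · exact infix_core (by decide) hlen hw
    · exact infix_core (by decide) hlen hw
    · exact absurd huP (by decide)
    · exact infix_core (by decide) hlen hw
    · exact infix_core (by decide) hlen hw
    · exact infix_core (by decide) hlen hw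
    · exact absurd huP (by decide)

/-- All short factors of all iterates are factors of `P2`. -/
lemma collapse : ∀ (n : ℕ) (w : List T), w.length ≤ 7 → w <:+: Pw^[n] [A] → w <:+: P2 := by
  intro n
  induction n with
  | zero =>
    intro w _ hw
    simp only [Function.iterate_zero, id_eq] at hw
    have : [A] <:+: P2 := by decide
    exact hw.trans this
  | succ n ih =>
    intro w hlen hw
    rw [Function.iterate_succ_apply'] at hw
    obtain ⟨u, hu, hul, hwu⟩ := split7 _ w hlen hw
    exact step u w hul (ih u (hul.trans (by norm_num)) hu) hlen hwu

set_option maxRecDepth 10000 in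
lemma ref_closed : ∀ i : Fin 170, ∀ l : Fin 8, refTw ((P2.drop i).take l) <:+: P2 := by
  decide

theorem stmt10 (w : List T) (hlen : w.length ≤ 7)
    (h : ∃ n : ℕ, w <:+: Pw^[n] [A]) :
    ∃ m : ℕ, refTw w <:+: Pw^[m] [A] := by
  obtain ⟨n, hn⟩ := h
  have hP2 : w <:+: P2 := collapse n w hlen hn
  refine ⟨2, ?_⟩
  rw [P2_eq]
  obtain ⟨s, t, hst⟩ := hP2
  have hsl : s.length < 170 := by
    have : s.length ≤ P2.length := by rw [← hst]; simp
    have h169 : P2.length = 169 := P2_len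
    omega
  have hd : P2.drop s.length = w ++ t := by
    rw [← hst, List.append_assoc, List.drop_left]
  have hw' : (P2.drop s.length).take w.length = w := by
    rw [hd, List.take_left]
  have := ref_closed ⟨s.length, hsl⟩ ⟨w.length, by omega⟩
  simpa [hw'] using this
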